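/- arXiv:2403.13639 — 3 statements merged into one kernel-verified Lean document; each statement's English description precedes it below -/
import Mathlib

section
/- The optimal value of a right-hand-side parametric linear program is convex and continuous piecewise affine: let G be a real p×m matrix, S a real p×n matrix, w ∈ ℝ^p, and c ∈ ℝ^m, and suppose that for every x ∈ ℝ^n the polyhedron U(x) = {u ∈ ℝ^m : G u ≤ w + S x} is nonempty and compact. Then the function J : ℝ^n → ℝ defined by J(x) = min{ cᵀu : u ∈ U(x) } is convex on ℝ^n and continuous piecewise affine. -/
/-!
Convexity: a convex combination of optimal points for the parameters `x` and `y` is feasible for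
the same combination of `x` and `y`; a finite convex function on `ℝⁿ` is continuous.

Piecewise affinity: an LP over a nonempty compact polyhedron has an optimal vertex, i.e. an optimal
point whose active rows span `ℝᵐ`. Indeed, if the active rows of an optimal `u` do not span, move
`u` along a direction `d ≠ 0` orthogonal to them: the cost is constant along `d` by optimality,
and boundedness makes an inactive constraint tight, which enlarges the active span. Picking `m`
independent active rows `s` gives `u = G_s⁻¹ (w_s + S_s x)`, so `J x = cᵀ G_s⁻¹ (w_s + S_s x)` is
one of the finitely many affine functions indexed by `s : Fin m → Fin p`.
-/

open Matrix Set Filter Topology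

/-- A function `h : ℝ^d → ℝ` is continuous piecewise affine if it is continuous and
there are finitely many affine functions `gᵢ(x) = ⟨aᵢ, x⟩ + cᵢ` such that for every `x`,
`h x` equals `gᵢ x` for some `i`. -/
def IsCPWA {d : ℕ} (h : (Fin d → ℝ) → ℝ) : Prop :=
  Continuous h ∧ ∃ (r : ℕ) (a : Fin r → Fin d → ℝ) (c : Fin r → ℝ),
    ∀ x : Fin d → ℝ, ∃ i : Fin r, h x = (∑ j, a i j * x j) + c i

theorem Submodule.exists_ne_zero_forall_dotProduct_eq_zero {K κ : Type*} [Field K] [Fintype κ]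
    {W : Submodule K (κ → K)} (hW : W ≠ ⊤) : ∃ d ≠ 0, ∀ v ∈ W, v ⬝ᵥ d = 0 := by
  classical
  obtain ⟨φ, hφ0, hφW⟩ := W.exists_dual_map_eq_bot_of_lt_top hW.lt_top inferInstance
  refine ⟨(dotProductEquiv K κ).symm φ, by simpa using hφ0, fun v hv => ?_⟩
  have hφv : φ v ∈ W.map φ := Submodule.mem_map_of_mem hv
  rw [hφW, Submodule.mem_bot] at hφv
  rw [dotProduct_comm, ← hφv, ← dotProductEquiv_apply_apply, LinearEquiv.apply_symm_apply]

theorem Matrix.exists_isUnit_submatrix_of_span_row_eq_top {K ι κ : Type*} [Field K] [Fintype κ]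
    [DecidableEq κ] (G : Matrix ι κ K) {S : Set ι} (h : Submodule.span K (G.row '' S) = ⊤) :
    ∃ s : κ → ι, (∀ k, s k ∈ S) ∧ IsUnit (G.submatrix s id) := by
  obtain ⟨τ, a, -, hspan, hli⟩ := exists_linearIndependent' K (fun i : S => G.row i)
  rw [← image_eq_range, h] at hspan
  let e : κ ≃ τ := ((Module.Basis.mk hli hspan.ge).indexEquiv (Pi.basisFun K κ)).symm
  refine ⟨fun k => a (e k), fun k => (a (e k)).2, ?_⟩
  rw [← linearIndependent_rows_iff_isUnit]
  exact hli.comp e e.injective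

theorem Matrix.mulVec_add_smul_apply {R ι κ : Type*} [CommSemiring R] [Fintype κ]
    (G : Matrix ι κ R) (u d : κ → R) (t : R) (i : ι) : (G *ᵥ (u + t • d)) i = (G *ᵥ u) i + t * (G *ᵥ d) i := by
  simp [mulVec_add, mulVec_smul]

namespace LinearProgram

variable {ι κ : Type*} [Fintype κ]

def polyhedron (G : Matrix ι κ ℝ) (b : ι → ℝ) : Set (κ → ℝ) := {u | G *ᵥ u ≤ b}

def activeSpan (G : Matrix ι κ ℝ) (b : ι → ℝ) (u : κ → ℝ) : Submodule ℝ (κ → ℝ) :=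
  Submodule.span ℝ (G.row '' {i | (G *ᵥ u) i = b i})

/-- The optimal value; a junk `0` when the LP is infeasible or unbounded below. -/
noncomputable def value (G : Matrix ι κ ℝ) (c : κ → ℝ) (b : ι → ℝ) : ℝ :=
  sInf ((c ⬝ᵥ ·) '' polyhedron G b)

variable {G : Matrix ι κ ℝ} {b : ι → ℝ} {c u d : κ → ℝ}

theorem value_eq_of_isMinOn (hu : u ∈ polyhedron G b)
    (hmin : IsMinOn (c ⬝ᵥ ·) (polyhedron G b) u) : value G c b = c ⬝ᵥ u :=
  IsLeast.csInf_eq ⟨mem_image_of_mem _ hu, forall_mem_image.2 hmin⟩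

theorem value_le (hcpt : IsCompact (polyhedron G b)) (hu : u ∈ polyhedron G b) :
    value G c b ≤ c ⬝ᵥ u :=
  csInf_le (hcpt.image (by fun_prop)).bddBelow (mem_image_of_mem _ hu)

variable {σ : Type*} [Fintype σ]

theorem convexOn_value (S : Matrix ι σ ℝ) (w : ι → ℝ)
    (hne : ∀ x, (polyhedron G (w + S *ᵥ x)).Nonempty)
    (hcpt : ∀ x, IsCompact (polyhedron G (w + S *ᵥ x))) :
    ConvexOn ℝ univ fun x => value G c (w + S *ᵥ x) := by
  refine ⟨convex_univ, fun x _ y _ a a' ha ha' hab => ?_⟩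
  obtain ⟨u, hu, humin⟩ := (hcpt x).exists_isMinOn (hne x) (f := (c ⬝ᵥ ·)) (by fun_prop)
  obtain ⟨v, hv, hvmin⟩ := (hcpt y).exists_isMinOn (hne y) (f := (c ⬝ᵥ ·)) (by fun_prop)
  have hmem : a • u + a' • v ∈ polyhedron G (w + S *ᵥ (a • x + a' • y)) := calc
    G *ᵥ (a • u + a' • v) = a • G *ᵥ u + a' • G *ᵥ v := by
      rw [mulVec_add, mulVec_smul, mulVec_smul]
    _ ≤ a • (w + S *ᵥ x) + a' • (w + S *ᵥ y) :=
      add_le_add (smul_le_smul_of_nonneg_left hu ha) (smul_le_smul_of_nonneg_left hv ha')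
    _ = w + S *ᵥ (a • x + a' • y) := by
      rw [mulVec_add, mulVec_smul, mulVec_smul]
      linear_combination (norm := module) hab • w
  calc value G c (w + S *ᵥ (a • x + a' • y)) ≤ c ⬝ᵥ (a • u + a' • v) := value_le (hcpt _) hmem
    _ = a • value G c (w + S *ᵥ x) + a' • value G c (w + S *ᵥ y) := by
      rw [value_eq_of_isMinOn hu humin, value_eq_of_isMinOn hv hvmin, dotProduct_add,
        dotProduct_smul, dotProduct_smul]

theorem eventually_add_smul_mem_polyhedron [Fintype ι] (hu : u ∈ polyhedron G b)
    (hd : ∀ i, (G *ᵥ u) i = b i → (G *ᵥ d) i = 0) :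
    ∀ᶠ t in 𝓝 (0 : ℝ), u + t • d ∈ polyhedron G b := by
  refine eventually_all.2 fun i => ?_
  rcases (hu i).eq_or_lt with hi | hi
  · exact Eventually.of_forall fun t => by simp [mulVec_add_smul_apply, hi, hd i hi]
  · have hcont : Continuous fun t : ℝ => (G *ᵥ (u + t • d)) i := by
      simp only [mulVec_add_smul_apply]; fun_prop
    exact ((hcont.tendsto 0).eventually_lt_const (by simpa using hi)).mono fun t => le_of_lt

theorem dotProduct_eq_zero_of_isMinOn [Fintype ι] (hu : u ∈ polyhedron G b)
    (hmin : IsMinOn (c ⬝ᵥ ·) (polyhedron G b) u)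
    (hd : ∀ i, (G *ᵥ u) i = b i → (G *ᵥ d) i = 0) : c ⬝ᵥ d = 0 := by
  have hlocal : IsLocalMin (fun t : ℝ => c ⬝ᵥ (u + t • d)) 0 :=
    (eventually_add_smul_mem_polyhedron hu hd).mono fun t ht => by simpa using hmin ht
  have hderiv : HasDerivAt (fun t : ℝ => c ⬝ᵥ (u + t • d)) (c ⬝ᵥ d) 0 := by
    simp only [dotProduct_add, dotProduct_smul, smul_eq_mul]
    simpa using ((hasDerivAt_id (0 : ℝ)).mul_const (c ⬝ᵥ d)).const_add (c ⬝ᵥ u)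
  exact hlocal.hasDerivAt_eq_zero hderiv

theorem exists_mulVec_pos_of_isBounded (hbdd : Bornology.IsBounded (polyhedron G b))
    (hu : u ∈ polyhedron G b) (hd0 : d ≠ 0) : ∃ i, 0 < (G *ᵥ d) i := by
  by_contra! hneg
  obtain ⟨R, hR⟩ := isBounded_iff_forall_norm_le.1 hbdd
  have hray : ∀ t : ℝ, 0 ≤ t → t * ‖d‖ ≤ R + ‖u‖ := fun t ht => by
    have hmem : u + t • d ∈ polyhedron G b := fun i => by
      rw [mulVec_add_smul_apply]; nlinarith [hu i, hneg i]
    calc t * ‖d‖ = ‖(u + t • d) - u‖ := by simp [norm_smul, abs_of_nonneg ht]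
      _ ≤ ‖u + t • d‖ + ‖u‖ := norm_sub_le _ _
      _ ≤ R + ‖u‖ := by gcongr; exact hR _ hmem
  have hd : 0 < ‖d‖ := norm_pos_iff.2 hd0
  have hR0 : 0 ≤ R := (norm_nonneg u).trans (hR u hu)
  have := hray ((R + ‖u‖ + 1) / ‖d‖) (by positivity)
  rw [div_mul_cancel₀ _ hd.ne'] at this
  linarith

theorem exists_add_smul_mem_polyhedron_of_mulVec_pos [Fintype ι] (hu : u ∈ polyhedron G b)
    (hpos : ∃ i, 0 < (G *ᵥ d) i) :
    ∃ t : ℝ, u + t • d ∈ polyhedron G b ∧ ∃ i, 0 < (G *ᵥ d) i ∧ (G *ᵥ (u + t • d)) i = b i := by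
  classical
  obtain ⟨i₀, hi₀, hfirst⟩ := Finset.exists_min_image {i | 0 < (G *ᵥ d) i}
    (fun i => (b i - (G *ᵥ u) i) / (G *ᵥ d) i) (by simpa [Finset.filter_nonempty_iff] using hpos)
  rw [Finset.mem_filter_univ] at hi₀
  set t := (b i₀ - (G *ᵥ u) i₀) / (G *ᵥ d) i₀
  have ht : 0 ≤ t := div_nonneg (sub_nonneg.2 (hu i₀)) hi₀.le
  refine ⟨t, fun i => ?_, i₀, hi₀, ?_⟩
  · rw [mulVec_add_smul_apply]
    rcases le_or_gt ((G *ᵥ d) i) 0 with hi | hi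
    · nlinarith [hu i]
    · have := hfirst i ((Finset.mem_filter_univ _).2 hi)
      rw [le_div_iff₀ hi] at this
      linarith
  · rw [mulVec_add_smul_apply, div_mul_cancel₀ _ hi₀.ne']
    ring

theorem exists_isMinOn_activeSpan_lt [Fintype ι] (hbdd : Bornology.IsBounded (polyhedron G b))
    (hu : u ∈ polyhedron G b) (hmin : IsMinOn (c ⬝ᵥ ·) (polyhedron G b) u)
    (htop : activeSpan G b u ≠ ⊤) :
    ∃ u' ∈ polyhedron G b, IsMinOn (c ⬝ᵥ ·) (polyhedron G b) u' ∧
      activeSpan G b u < activeSpan G b u' := by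
  obtain ⟨d, hd0, hdW⟩ := Submodule.exists_ne_zero_forall_dotProduct_eq_zero htop
  have hact : ∀ i, (G *ᵥ u) i = b i → (G *ᵥ d) i = 0 := fun i hi =>
    hdW _ (Submodule.subset_span ⟨i, hi, rfl⟩)
  have hcd := dotProduct_eq_zero_of_isMinOn hu hmin hact
  obtain ⟨t, ht, i₀, hi₀, hact₀⟩ := exists_add_smul_mem_polyhedron_of_mulVec_pos hu
    (exists_mulVec_pos_of_isBounded hbdd hu hd0)
  refine ⟨u + t • d, ht, fun v hv => ?_, lt_of_le_of_ne ?_ fun h => ?_⟩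
  · simpa [dotProduct_add, dotProduct_smul, hcd] using hmin hv
  · refine Submodule.span_mono (image_mono fun i (hi : (G *ᵥ u) i = b i) => ?_)
    show (G *ᵥ (u + t • d)) i = b i
    rw [mulVec_add_smul_apply, hact i hi, mul_zero, add_zero, hi]
  · have hrow : G.row i₀ ∈ activeSpan G b u := h ▸ Submodule.subset_span ⟨i₀, hact₀, rfl⟩
    exact hi₀.ne' (hdW _ hrow)

theorem exists_isMinOn_activeSpan_eq_top [Fintype ι] (hne : (polyhedron G b).Nonempty)
    (hcpt : IsCompact (polyhedron G b)) :
    ∃ u ∈ polyhedron G b, IsMinOn (c ⬝ᵥ ·) (polyhedron G b) u ∧ activeSpan G b u = ⊤ := by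
  obtain ⟨u₀, hu₀, hmin₀⟩ := hcpt.exists_isMinOn hne (f := (c ⬝ᵥ ·)) (by fun_prop)
  obtain ⟨u, ⟨hu, hmin⟩, hmax⟩ := exists_maximalFor_of_wellFoundedGT
    (fun u => u ∈ polyhedron G b ∧ IsMinOn (c ⬝ᵥ ·) (polyhedron G b) u) (activeSpan G b)
    ⟨u₀, hu₀, hmin₀⟩
  refine ⟨u, hu, hmin, by_contra fun htop => ?_⟩
  obtain ⟨u', hu', hmin', hlt⟩ := exists_isMinOn_activeSpan_lt hcpt.isBounded hu hmin htop
  exact hlt.not_ge (hmax ⟨hu', hmin'⟩ hlt.le)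

theorem dotProduct_eq_of_isUnit_submatrix [DecidableEq κ] {s : κ → ι}
    (hs : IsUnit (G.submatrix s id)) (hact : ∀ k, (G *ᵥ u) (s k) = b (s k)) :
    c ⬝ᵥ u = (c ᵥ* (G.submatrix s id)⁻¹) ⬝ᵥ (b ∘ s) := by
  set M := G.submatrix s id
  have hMu : M *ᵥ u = b ∘ s := funext hact
  calc c ⬝ᵥ u = c ⬝ᵥ ((M⁻¹ * M) *ᵥ u) := by
        rw [nonsing_inv_mul _ ((isUnit_iff_isUnit_det M).1 hs), one_mulVec]
    _ = (c ᵥ* M⁻¹) ⬝ᵥ (b ∘ s) := by rw [← mulVec_mulVec, dotProduct_mulVec, hMu]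

theorem exists_value_eq_affine [Fintype ι] [DecidableEq κ] (S : Matrix ι σ ℝ) (w : ι → ℝ)
    (x : σ → ℝ) (hne : (polyhedron G (w + S *ᵥ x)).Nonempty)
    (hcpt : IsCompact (polyhedron G (w + S *ᵥ x))) :
    ∃ s : κ → ι, value G c (w + S *ᵥ x) =
      (c ᵥ* (G.submatrix s id)⁻¹ ᵥ* S.submatrix s id) ⬝ᵥ x +
        (c ᵥ* (G.submatrix s id)⁻¹) ⬝ᵥ (w ∘ s) := by
  obtain ⟨u, hu, hmin, htop⟩ := exists_isMinOn_activeSpan_eq_top hne hcpt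
  obtain ⟨s, hact, hs⟩ := G.exists_isUnit_submatrix_of_span_row_eq_top htop
  refine ⟨s, ?_⟩
  rw [value_eq_of_isMinOn hu hmin, dotProduct_eq_of_isUnit_submatrix hs hact]
  change _ ⬝ᵥ (w ∘ s + S.submatrix s id *ᵥ x) = _
  rw [dotProduct_add, dotProduct_mulVec, add_comm]

end LinearProgram

/-- The optimal value `J(x) = min{cᵀu : G u ≤ w + S x}` of a right-hand-side parametric
linear program whose feasible polyhedron is nonempty and compact for every `x` is convex
and continuous piecewise affine. -/
theorem parametric_lp_value_convex_isCPWA {p m n : ℕ}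
    (G : Matrix (Fin p) (Fin m) ℝ) (S : Matrix (Fin p) (Fin n) ℝ)
    (w : Fin p → ℝ) (c : Fin m → ℝ)
    (hne : ∀ x : Fin n → ℝ,
      {u : Fin m → ℝ | ∀ i, G.mulVec u i ≤ w i + S.mulVec x i}.Nonempty)
    (hcpt : ∀ x : Fin n → ℝ,
      IsCompact {u : Fin m → ℝ | ∀ i, G.mulVec u i ≤ w i + S.mulVec x i}) :
    ConvexOn ℝ Set.univ (fun x : Fin n → ℝ =>
      sInf ((fun u : Fin m → ℝ => ∑ i, c i * u i) ''
        {u : Fin m → ℝ | ∀ i, G.mulVec u i ≤ w i + S.mulVec x i})) ∧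
    IsCPWA (fun x : Fin n → ℝ =>
      sInf ((fun u : Fin m → ℝ => ∑ i, c i * u i) ''
        {u : Fin m → ℝ | ∀ i, G.mulVec u i ≤ w i + S.mulVec x i})) := by
  change ConvexOn ℝ univ (fun x => LinearProgram.value G c (w + S *ᵥ x)) ∧
    IsCPWA (fun x => LinearProgram.value G c (w + S *ᵥ x))
  have hconv := LinearProgram.convexOn_value (c := c) S w hne hcpt
  let e := Fintype.equivFin (Fin m → Fin p)
  let A (s : Fin m → Fin p) := c ᵥ* (G.submatrix s id)⁻¹ ᵥ* S.submatrix s id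
  let C (s : Fin m → Fin p) := (c ᵥ* (G.submatrix s id)⁻¹) ⬝ᵥ (w ∘ s)
  refine ⟨hconv, continuousOn_univ.1 (hconv.continuousOn isOpen_univ), _,
    fun i => A (e.symm i), fun i => C (e.symm i), fun x => ?_⟩
  obtain ⟨s, hs⟩ := LinearProgram.exists_value_eq_affine S w x (hne x) (hcpt x)
  exact ⟨e s, by simp only [Equiv.symm_apply_apply]; exact hs⟩
end

section
/- Existence of a piecewise affine optimizer for a right-hand-side parametric linear program: let G be a real p×m matrix, S a real p×n matrix, w ∈ ℝ^p, and c ∈ ℝ^m, and suppose that for every x ∈ ℝ^n the polyhedron U(x) = {u ∈ ℝ^m : G u ≤ w + S x} is nonempty and compact. Then there exists a function u* : ℝ^n → ℝ^m and finitely many affine maps μ₁, …, μ_r : ℝ^n → ℝ^m such that for every x ∈ ℝ^n: u*(x) ∈ U(x), cᵀu*(x) = min{ cᵀu : u ∈ U(x) }, and u*(x) = μ_j(x) for some j ∈ {1, …, r}. -/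
/-!
For each parameter `x` the cost attains its minimum over the compact polyhedron `U(x)` on an
exposed face, and by Krein–Milman that face has an extreme point `u*(x)`. At an extreme point of a
polyhedron the active constraints form an injective linear system, so `u*(x)` is recovered from
the active right-hand sides by a left inverse of that system. That left inverse depends only on
the active set, the right-hand side `w + S x` is affine in `x`, and there are finitely many
possible active sets.
-/

open Set Filter Topology

theorem IsCompact.exists_mem_extremePoints_isMinOn {E : Type*} [AddCommGroup E] [Module ℝ E]
    [TopologicalSpace E] [T2Space E] [IsTopologicalAddGroup E] [ContinuousSMul ℝ E]
    [LocallyConvexSpace ℝ E] {s : Set E} (hs : IsCompact s) (hne : s.Nonempty)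
    (l : StrongDual ℝ E) : ∃ u ∈ s.extremePoints ℝ, IsMinOn l s u := by
  have hexp : IsExposed ℝ s ((-l).toExposed s) := ContinuousLinearMap.toExposed.isExposed
  obtain ⟨z, hzs, hz⟩ := hs.exists_isMinOn hne l.continuous.continuousOn
  obtain ⟨u, hu⟩ := (hexp.isCompact hs).extremePoints_nonempty
    ⟨z, hzs, fun y hy => neg_le_neg (hz hy)⟩
  exact ⟨u, hexp.isExtreme.extremePoints_subset_extremePoints hu,
    fun y hy => neg_le_neg_iff.mp (hu.1.2 y hy)⟩

theorem pi_active_injective_of_mem_extremePoints {ι E : Type*} [Finite ι] [AddCommGroup E]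
    [Module ℝ E] (a : ι → E →ₗ[ℝ] ℝ) (b : ι → ℝ) {u : E}
    (hu : u ∈ {v | ∀ i, a i v ≤ b i}.extremePoints ℝ) :
    Function.Injective (LinearMap.pi fun i : {i | a i u = b i} => a i) := by
  refine (injective_iff_map_eq_zero _).mpr fun d hd => ?_
  have hfeas : ∀ᶠ t in 𝓝 (0 : ℝ), ∀ i, a i (u + t • d) ≤ b i := by
    refine eventually_all.mpr fun i => ?_
    by_cases hi : a i u = b i
    · have had : a i d = 0 := congrFun hd ⟨i, hi⟩
      exact Eventually.of_forall fun t => by simp [had, hi]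
    · simp only [map_add, map_smul, smul_eq_mul]
      have hcont : Continuous fun t : ℝ => a i u + t * a i d := by fun_prop
      exact (hcont.continuousAt.eventually_lt continuousAt_const
        (by simpa using lt_of_le_of_ne (hu.1 i) hi)).mono fun t ht => ht.le
  have hboth : ∀ᶠ t in 𝓝[≠] (0 : ℝ),
      (∀ i, a i (u + t • d) ≤ b i) ∧ ∀ i, a i (u + (-t) • d) ≤ b i :=
    nhdsWithin_le_nhds (hfeas.and (continuous_neg.tendsto' 0 0 neg_zero |>.eventually hfeas))
  obtain ⟨t, ⟨hplus, hminus⟩, ht⟩ := (hboth.and self_mem_nhdsWithin).exists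
  have hseg : u ∈ openSegment ℝ (u + t • d) (u + (-t) • d) :=
    ⟨1 / 2, 1 / 2, by norm_num, by norm_num, by norm_num, by module⟩
  have htd : t • d = 0 := add_eq_left.mp (hu.2 hplus hminus hseg)
  exact (smul_eq_zero.mp htd).resolve_left ht

theorem exists_affineMap_eq_of_injective {K V W V' P : Type*} [Field K] [AddCommGroup V]
    [Module K V] [AddCommGroup W] [Module K W] [AddCommGroup V'] [Module K V'] [AddTorsor V' P]
    {T : V →ₗ[K] W} (hT : Function.Injective T) (β : P →ᵃ[K] W) :
    ∃ μ : P →ᵃ[K] V, ∀ x v, T v = β x → v = μ x := by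
  obtain ⟨L, hL⟩ := T.exists_leftInverse_of_injective (LinearMap.ker_eq_bot.mpr hT)
  refine ⟨L.toAffineMap.comp β, fun x v hv => ?_⟩
  simp [← hv, ← LinearMap.comp_apply, hL]

/-- Existence of a piecewise affine optimizer for a right-hand-side parametric linear
program: if the polyhedron `U(x) = {u : G u ≤ w + S x}` is nonempty and compact for every
`x`, then there is an optimal solution map `u* : ℝ^n → ℝ^m` and finitely many affine maps
`μ₁, …, μ_r` such that for every `x`, `u*(x)` is feasible, `cᵀ u*(x)` is the minimum of
`cᵀ u` over `U(x)`, and `u*(x) = μ_j(x)` for some `j`. -/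
theorem parametric_lp_pwa_optimizer {p m n : ℕ}
    (G : Matrix (Fin p) (Fin m) ℝ) (S : Matrix (Fin p) (Fin n) ℝ)
    (w : Fin p → ℝ) (c : Fin m → ℝ)
    (hne : ∀ x : Fin n → ℝ,
      {u : Fin m → ℝ | ∀ i, G.mulVec u i ≤ w i + S.mulVec x i}.Nonempty)
    (hcpt : ∀ x : Fin n → ℝ,
      IsCompact {u : Fin m → ℝ | ∀ i, G.mulVec u i ≤ w i + S.mulVec x i}) :
    ∃ (ustar : (Fin n → ℝ) → (Fin m → ℝ)) (r : ℕ)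
      (μ : Fin r → ((Fin n → ℝ) →ᵃ[ℝ] (Fin m → ℝ))),
      ∀ x : Fin n → ℝ,
        ustar x ∈ {u : Fin m → ℝ | ∀ i, G.mulVec u i ≤ w i + S.mulVec x i} ∧
        (∀ u ∈ {u : Fin m → ℝ | ∀ i, G.mulVec u i ≤ w i + S.mulVec x i},
          ∑ i, c i * ustar x i ≤ ∑ i, c i * u i) ∧
        ∃ j : Fin r, ustar x = μ j x := by
  let a : Fin p → (Fin m → ℝ) →ₗ[ℝ] ℝ := fun i => LinearMap.proj i ∘ₗ G.mulVecLin
  let β : (Fin n → ℝ) →ᵃ[ℝ] (Fin p → ℝ) := AffineMap.const ℝ _ w + S.mulVecLin.toAffineMap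
  let T (A : Set (Fin p)) := LinearMap.pi fun i : A => a i
  let Candidate := {A : Set (Fin p) // Function.Injective (T A)}
  choose ustar hext hmin using fun x => (hcpt x).exists_mem_extremePoints_isMinOn (hne x)
    (LinearMap.toContinuousLinearMap (dotProductBilin ℝ ℝ c))
  choose μ hμ using fun A : Candidate => exists_affineMap_eq_of_injective A.2
    ((LinearMap.funLeft ℝ ℝ (Subtype.val : A.1 → Fin p)).toAffineMap.comp β)
  obtain ⟨r, ⟨e⟩⟩ := Finite.exists_equiv_fin Candidate
  refine ⟨ustar, r, μ ∘ e.symm, fun x => ?_⟩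
  let active : Candidate :=
    ⟨_, pi_active_injective_of_mem_extremePoints a (β x) (hext x)⟩
  refine ⟨(hext x).1, fun u hu => hmin x hu, e active, ?_⟩
  simpa using hμ active x (ustar x) (funext fun i => i.2)
end

section
/- The Bellman optimization step preserves piecewise linearity of the value function (Lemma 1, value part): let g : ℝ^n × ℝ^m → ℝ and V : ℝ^n → ℝ be continuous piecewise affine, let γ ≥ 0, let W be a finite set with probability weights p_w ≥ 0 summing to 1, let f_w : ℝ^n × ℝ^m → ℝ^n be an affine map for each w ∈ W, and let U ⊆ ℝ^m be a nonempty compact polyhedron (a bounded finite intersection of closed half-spaces). Then the function V' : ℝ^n → ℝ defined by V'(x) = max_{u ∈ U} Σ_{w ∈ W} p_w · ( g(x, u) + γ · V(f_w(x, u)) ) is well defined (the maximum is attained) and is continuous piecewise affine. -/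
/-- A function `g : ℝ^n × ℝ^m → ℝ` is continuous piecewise affine if it is continuous and
there are finitely many affine functions `gᵢ(x, u) = ⟨aᵢ, x⟩ + ⟨bᵢ, u⟩ + cᵢ` such that for
every `(x, u)`, `g x u` equals `gᵢ (x, u)` for some `i`. -/
def IsCPWA2 {n m : ℕ} (g : (Fin n → ℝ) → (Fin m → ℝ) → ℝ) : Prop :=
  Continuous (fun p : (Fin n → ℝ) × (Fin m → ℝ) => g p.1 p.2) ∧
  ∃ (r : ℕ) (a : Fin r → Fin n → ℝ) (b : Fin r → Fin m → ℝ) (c : Fin r → ℝ),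
    ∀ (x : Fin n → ℝ) (u : Fin m → ℝ), ∃ i : Fin r,
      g x u = (∑ j, a i j * x j) + (∑ j, b i j * u j) + c i

open Set Submodule Filter Topology

theorem exists_between_of_finite {A B : Set ℝ} (hA : A.Finite) (hB : B.Finite)
    (h : ∀ a ∈ A, ∀ b ∈ B, a ≤ b) : ∃ s, (∀ a ∈ A, a ≤ s) ∧ ∀ b ∈ B, s ≤ b := by
  rcases A.eq_empty_or_nonempty with rfl | hne
  · obtain ⟨s, hs⟩ := hB.bddBelow
    exact ⟨s, by simp, fun b hb => hs hb⟩
  · exact ⟨sSup A, fun a ha => le_csSup hA.bddAbove ha,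
      fun b hb => csSup_le hne fun a ha => h a ha b hb⟩

variable {E F : Type*} [AddCommGroup E] [Module ℝ E] [AddCommGroup F] [Module ℝ F]

def IsPolyhedron (P : Set E) : Prop :=
  ∃ L : Set (Module.Dual ℝ E × ℝ), L.Finite ∧ P = {y | ∀ r ∈ L, r.1 y ≤ r.2}

theorem isPolyhedron_setOf_le (α β : E →ᵃ[ℝ] ℝ) : IsPolyhedron {y | α y ≤ β y} := by
  refine ⟨{((α - β).linear, β 0 - α 0)}, finite_singleton _, ?_⟩
  ext y
  have := (α - β).linearMap_vsub y 0
  simp only [vsub_eq_sub, sub_zero, AffineMap.coe_sub, Pi.sub_apply] at this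
  simp only [mem_ofPred_eq, mem_singleton_iff, forall_eq, this]
  constructor <;> intro h <;> linarith

namespace IsPolyhedron

theorem preimage {P : Set F} (hP : IsPolyhedron P) (f : E →ₗ[ℝ] F) :
    IsPolyhedron (f ⁻¹' P) := by
  obtain ⟨L, hL, rfl⟩ := hP
  refine ⟨(fun r => (r.1 ∘ₗ f, r.2)) '' L, hL.image _, ?_⟩
  ext y
  simp only [mem_preimage, mem_ofPred_eq, forall_mem_image]
  rfl

theorem inter {P Q : Set E} (hP : IsPolyhedron P) (hQ : IsPolyhedron Q) :
    IsPolyhedron (P ∩ Q) := by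
  obtain ⟨L, hL, rfl⟩ := hP
  obtain ⟨M, hM, rfl⟩ := hQ
  exact ⟨L ∪ M, hL.union hM, by ext; simp [or_imp, forall_and]⟩

theorem biInter {ι : Type*} {s : Set ι} (hs : s.Finite) {P : ι → Set E}
    (hP : ∀ i ∈ s, IsPolyhedron (P i)) : IsPolyhedron (⋂ i ∈ s, P i) := by
  choose! L hL hPL using hP
  refine ⟨⋃ i ∈ s, L i, hs.biUnion hL, ?_⟩
  ext y
  simp only [mem_iInter, mem_iUnion, mem_ofPred_eq, forall_exists_index]
  constructor
  · intro h r i hi hr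
    exact (hPL i hi ▸ h i hi : y ∈ {y | ∀ r ∈ L i, r.1 y ≤ r.2}) r hr
  · intro h i hi
    rw [hPL i hi]
    exact fun r hr => h r i hi hr

theorem setOf_exists_add_smul_mem {P : Set E} (hP : IsPolyhedron P) (d : E) :
    IsPolyhedron {y | ∃ s : ℝ, y + s • d ∈ P} := by
  obtain ⟨L, hL, rfl⟩ := hP
  have hsub : ∀ q : Module.Dual ℝ E × ℝ → Prop, {r ∈ L | q r}.Finite :=
    fun q => hL.subset (sep_subset _ _)
  -- Fourier–Motzkin: each row increasing along `d` is combined with each row decreasing along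
  -- `d` into a row vanishing on `d`.
  let combine (p q : Module.Dual ℝ E × ℝ) : Module.Dual ℝ E × ℝ :=
    (p.1 d • q.1 - q.1 d • p.1, p.1 d * q.2 - q.1 d * p.2)
  refine ⟨{r ∈ L | r.1 d = 0} ∪ image2 combine {r ∈ L | 0 < r.1 d} {r ∈ L | r.1 d < 0},
    (hsub _).union ((hsub _).image2 _ (hsub _)), ?_⟩
  have hval : ∀ (r : Module.Dual ℝ E × ℝ) (y : E) (s : ℝ),
      r.1 (y + s • d) = r.1 y + s * r.1 d := fun r y s => by simp
  ext y
  simp only [mem_ofPred_eq, mem_union, mem_image2]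
  constructor
  · rintro ⟨s, hs⟩ r (⟨hr, hr0⟩ | ⟨p, ⟨hp, hpd⟩, q, ⟨hq, hqd⟩, rfl⟩)
    · simpa [hval, hr0] using hs r hr
    · have h1 := hs p hp
      have h2 := hs q hq
      rw [hval] at h1 h2
      simp only [combine, LinearMap.sub_apply, LinearMap.smul_apply, smul_eq_mul]
      linarith [mul_le_mul_of_nonneg_left h2 hpd.le,
        mul_le_mul_of_nonneg_left h1 (neg_nonneg.2 hqd.le)]
  · intro h
    obtain ⟨s, hlow, hup⟩ := exists_between_of_finite
      ((hsub fun r => r.1 d < 0).image fun q => (q.1 y - q.2) / -q.1 d)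
      ((hsub fun r => 0 < r.1 d).image fun p => (p.2 - p.1 y) / p.1 d)
      (by
        rintro _ ⟨q, ⟨hq, hqd⟩, rfl⟩ _ ⟨p, ⟨hp, hpd⟩, rfl⟩
        have := h (combine p q) (Or.inr ⟨p, ⟨hp, hpd⟩, q, ⟨hq, hqd⟩, rfl⟩)
        simp only [combine, LinearMap.sub_apply, LinearMap.smul_apply, smul_eq_mul] at this
        rw [div_le_div_iff₀ (neg_pos.2 hqd) hpd]
        linarith)
    refine ⟨s, fun r hr => ?_⟩
    rw [hval]
    rcases lt_trichotomy (r.1 d) 0 with hneg | hzero | hpos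
    · have := hlow _ ⟨r, ⟨hr, hneg⟩, rfl⟩
      rw [div_le_iff₀ (neg_pos.2 hneg)] at this
      linarith
    · simpa [hzero] using h r (Or.inl ⟨hr, hzero⟩)
    · have := hup _ ⟨r, ⟨hr, hpos⟩, rfl⟩
      rw [le_div_iff₀ hpos] at this
      linarith


theorem setOf_exists_add_mem_span {P : Set E} (hP : IsPolyhedron P) {S : Set E}
    (hS : S.Finite) : IsPolyhedron {y | ∃ k ∈ span ℝ S, y + k ∈ P} := by
  induction S, hS using Set.Finite.induction_on with
  | empty => simpa using hP
  | @insert d S _ _ ih =>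
    convert ih.setOf_exists_add_smul_mem d using 1
    ext y
    simp only [mem_ofPred_eq, mem_span_insert]
    constructor
    · rintro ⟨_, ⟨s, k, hk, rfl⟩, h⟩
      exact ⟨s, k, hk, by convert h using 1; abel⟩
    · rintro ⟨s, k, hk, h⟩
      exact ⟨_, ⟨s, k, hk, rfl⟩, by convert h using 1; abel⟩

theorem image_fst [Module.Finite ℝ F] {Q : Set (E × F)} (hQ : IsPolyhedron Q) :
    IsPolyhedron (Prod.fst '' Q) := by
  obtain ⟨S, hS⟩ := Module.Finite.fg_top (R := ℝ) (M := F)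
  have hspan : span ℝ (LinearMap.inr ℝ E F '' S) = LinearMap.range (LinearMap.inr ℝ E F) := by
    rw [span_image, hS, Submodule.map_top]
  convert (hQ.setOf_exists_add_mem_span
    (S.finite_toSet.image (LinearMap.inr ℝ E F))).preimage (LinearMap.inl ℝ E F) using 1
  ext y
  simp only [mem_image, mem_preimage, mem_ofPred_eq, hspan, LinearMap.mem_range,
    exists_exists_eq_and, LinearMap.inl_apply, LinearMap.inr_apply, Prod.mk_add_mk, add_zero,
    zero_add]
  constructor
  · rintro ⟨⟨_, u⟩, hQ, rfl⟩
    exact ⟨u, hQ⟩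
  · rintro ⟨u, hQ⟩
    exact ⟨_, hQ, rfl⟩

theorem exists_finite_affineMap_eq_of_isGreatest {P : Set (E × ℝ)} (hP : IsPolyhedron P) :
    ∃ G : Set (E →ᵃ[ℝ] ℝ), G.Finite ∧
      ∀ x t, IsGreatest {s | (x, s) ∈ P} t → ∃ ψ ∈ G, t = ψ x := by
  obtain ⟨L, hL, rfl⟩ := hP
  let c (r : Module.Dual ℝ (E × ℝ) × ℝ) : ℝ := r.1 (0, 1)
  let ψ (r : Module.Dual ℝ (E × ℝ) × ℝ) : E →ᵃ[ℝ] ℝ :=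
    (c r)⁻¹ • (AffineMap.const ℝ E r.2 - (r.1 ∘ₗ LinearMap.inl ℝ E ℝ).toAffineMap)
  have hrow : ∀ r x s, r.1 (x, s) = r.1 (x, 0) + s * c r := fun r x s => by
    rw [show (x, s) = (x, 0) + s • ((0 : E), (1 : ℝ)) by simp, map_add, map_smul, smul_eq_mul]
  have hle : ∀ r x s, 0 < c r → (r.1 (x, s) ≤ r.2 ↔ s ≤ ψ r x) := fun r x s hc => by
    simp only [ψ, AffineMap.coe_smul, AffineMap.coe_sub, AffineMap.coe_const,
      LinearMap.coe_toAffineMap, LinearMap.coe_comp, LinearMap.coe_inl, Pi.smul_apply,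
      Pi.sub_apply, Function.const_apply, Function.comp_apply, smul_eq_mul]
    rw [hrow, ← div_eq_inv_mul, le_div_iff₀ hc]
    constructor <;> intro h <;> linarith
  have hmono : ∀ r x t s, c r ≤ 0 → t ≤ s → r.1 (x, s) ≤ r.1 (x, t) := fun r x t s hc hts => by
    rw [hrow r x s, hrow r x t]
    nlinarith
  have hJ : {r ∈ L | 0 < c r}.Finite := hL.subset (sep_subset _ _)
  refine ⟨ψ '' {r ∈ L | 0 < c r}, hJ.image ψ, fun x t ⟨ht, hmax⟩ => ?_⟩
  rcases eq_empty_or_nonempty {r ∈ L | 0 < c r} with hJe | hJne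
  · have hc : ∀ r ∈ L, c r ≤ 0 := fun r hr => not_lt.1 fun h => hJe.subset ⟨hr, h⟩
    have : t + 1 ≤ t := hmax fun r hr => (hmono r x t _ (hc r hr) (by linarith)).trans (ht r hr)
    linarith
  -- `t` is the least of the bounds `ψ r x` from rows with positive `t`-coefficient, since that
  -- bound is itself feasible.
  obtain ⟨r₀, hr₀, hmin⟩ := exists_min_image _ (fun r => ψ r x) hJ hJne
  have ht₀ : t ≤ ψ r₀ x := (hle r₀ x t hr₀.2).1 (ht r₀ hr₀.1)
  refine ⟨ψ r₀, mem_image_of_mem ψ hr₀, le_antisymm ht₀ (hmax fun r hr => ?_)⟩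
  by_cases hc : 0 < c r
  · exact (hle r x _ hc).2 (hmin r ⟨hr, hc⟩)
  · exact (hmono r x t _ (not_lt.1 hc) ht₀).trans (ht r hr)

end IsPolyhedron

theorem isPolyhedron_setOf_exists_forall_le [Module.Finite ℝ F] {U : Set F}
    (hU : IsPolyhedron U) {σ : Set (E × F →ᵃ[ℝ] ℝ)} (hσ : σ.Finite) :
    IsPolyhedron {p : E × ℝ | ∃ u ∈ U, ∀ φ ∈ σ, p.2 ≤ φ (p.1, u)} := by
  have hQ := (hU.preimage (LinearMap.snd ℝ (E × ℝ) F)).inter (.biInter hσ fun φ _ =>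
    isPolyhedron_setOf_le (LinearMap.snd ℝ E ℝ ∘ₗ LinearMap.fst ℝ (E × ℝ) F).toAffineMap
      (φ.comp ((LinearMap.fst ℝ E ℝ).prodMap LinearMap.id).toAffineMap))
  convert hQ.image_fst using 1
  ext ⟨x, t⟩
  simp

def IsPiecewiseAffine (f : E → ℝ) : Prop :=
  ∃ S : Set (E →ᵃ[ℝ] ℝ), S.Finite ∧ ∀ x, ∃ φ ∈ S, f x = φ x

namespace IsPiecewiseAffine

theorem add {f g : E → ℝ} (hf : IsPiecewiseAffine f) (hg : IsPiecewiseAffine g) :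
    IsPiecewiseAffine fun x => f x + g x := by
  obtain ⟨S, hS, hfS⟩ := hf
  obtain ⟨T, hT, hgT⟩ := hg
  refine ⟨image2 (· + ·) S T, hS.image2 _ hT, fun x => ?_⟩
  obtain ⟨φ, hφ, hfx⟩ := hfS x
  obtain ⟨ψ, hψ, hgx⟩ := hgT x
  exact ⟨φ + ψ, mem_image2_of_mem hφ hψ, by simp [hfx, hgx]⟩

theorem const_mul {f : E → ℝ} (hf : IsPiecewiseAffine f) (c : ℝ) :
    IsPiecewiseAffine fun x => c * f x := by
  obtain ⟨S, hS, hfS⟩ := hf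
  refine ⟨(c • ·) '' S, hS.image _, fun x => ?_⟩
  obtain ⟨φ, hφ, hfx⟩ := hfS x
  exact ⟨c • φ, mem_image_of_mem _ hφ, by simp [hfx]⟩

theorem comp_affineMap {f : F → ℝ} (hf : IsPiecewiseAffine f) (a : E →ᵃ[ℝ] F) :
    IsPiecewiseAffine fun x => f (a x) := by
  obtain ⟨S, hS, hfS⟩ := hf
  refine ⟨(·.comp a) '' S, hS.image _, fun x => ?_⟩
  obtain ⟨φ, hφ, hfx⟩ := hfS (a x)
  exact ⟨φ.comp a, mem_image_of_mem _ hφ, hfx⟩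

theorem finset_sum {ι : Type*} (s : Finset ι) {f : ι → E → ℝ}
    (hf : ∀ i ∈ s, IsPiecewiseAffine (f i)) : IsPiecewiseAffine fun x => ∑ i ∈ s, f i x := by
  classical
  induction s using Finset.induction_on with
  | empty => exact ⟨{0}, finite_singleton 0, fun x => ⟨0, rfl, by simp⟩⟩
  | insert i s hi ih =>
    simp only [Finset.sum_insert hi]
    exact (hf i (s.mem_insert_self i)).add (ih fun j hj => hf j (Finset.mem_insert_of_mem hj))

end IsPiecewiseAffine

theorem AffineMap.lt_of_apply_zero_lt_of_le {φ ψ : ℝ →ᵃ[ℝ] ℝ} {c t : ℝ} (h0 : φ 0 < ψ 0)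
    (hc : ψ c ≤ φ c) (hc0 : 0 ≤ c) (hct : c < t) : ψ t < φ t := by
  have line : ∀ (φ : ℝ →ᵃ[ℝ] ℝ) t, φ t = φ 0 + t * (φ 1 - φ 0) := fun φ t => by
    have := φ.apply_lineMap (0 : ℝ) 1 t
    simp only [AffineMap.lineMap_apply_module, smul_eq_mul, mul_zero, mul_one, zero_add] at this
    linarith
  rw [line φ, line ψ] at hc ⊢
  have hslope : 0 < (φ 1 - φ 0) - (ψ 1 - ψ 0) := by nlinarith
  nlinarith [mul_lt_mul_of_pos_right hct hslope]

theorem exists_mem_le_apply_zero_and_apply_one_le {f : ℝ → ℝ} (hf : Continuous f)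
    {S : Set (ℝ →ᵃ[ℝ] ℝ)} (hS : S.Finite) (hfS : ∀ t, ∃ φ ∈ S, f t = φ t) :
    ∃ φ ∈ S, f 0 ≤ φ 0 ∧ φ 1 ≤ f 1 := by
  set D := {t ∈ Icc (0 : ℝ) 1 | ∃ φ ∈ S, f 0 ≤ φ 0 ∧ φ t ≤ f t}
  have hDclosed : IsClosed D := by
    have : D = Icc 0 1 ∩ ⋃ φ ∈ S, {_t | f 0 ≤ φ 0} ∩ {t | φ t ≤ f t} := by
      ext t
      simp only [D, mem_inter_iff, mem_iUnion, mem_ofPred_eq, exists_prop]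
    rw [this]
    exact isClosed_Icc.inter (hS.isClosed_biUnion fun φ _ =>
      isClosed_const.inter (isClosed_le φ.continuous_of_finiteDimensional hf))
  have hDbdd : BddAbove D := ⟨1, fun t ht => ht.1.2⟩
  have h0D : (0 : ℝ) ∈ D := by
    obtain ⟨φ, hφ, h⟩ := hfS 0
    exact ⟨left_mem_Icc.2 zero_le_one, φ, hφ, h.le, h.ge⟩
  obtain ⟨⟨hc0, hc1⟩, j, hj, hj0, hjc⟩ := hDclosed.csSup_mem ⟨0, h0D⟩ hDbdd
  set c := sSup D
  rcases hc1.eq_or_lt with hc1 | hc1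
  · exact ⟨j, hj, hj0, hc1 ▸ hjc⟩
  exfalso
  -- A piece `k` followed by `f` just right of `c` starts below `j` at `0` and catches up with it
  -- by `c`, so it lies above `j` beyond `c`, where `f` lies below `j`.
  have hgt : ∀ t ∈ Ioc c 1, ∀ φ ∈ S, f 0 ≤ φ 0 → f t < φ t := fun t ht φ hφ hφ0 =>
    not_le.1 fun hle => ht.1.not_ge (le_csSup hDbdd ⟨⟨hc0.trans ht.1.le, ht.2⟩, φ, hφ, hφ0, hle⟩)
  obtain ⟨k, hk, hfreq⟩ : ∃ k ∈ S, ∃ᶠ t in 𝓝[>] c, f t = k t :=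
    hS.frequently_exists.1 (Eventually.of_forall hfS).frequently
  obtain ⟨t, hft, ht⟩ := (hfreq.and_eventually (Ioc_mem_nhdsGT hc1)).exists
  have hk0 : k 0 < f 0 := not_le.1 fun h => (hgt t ht k hk h).ne hft
  have hkc : f c = k c := (isClosed_eq hf k.continuous_of_finiteDimensional).closure_subset
    (mem_closure_iff_frequently.2 (hfreq.filter_mono nhdsWithin_le_nhds))
  exact (hgt t ht j hj hj0).not_gt (hft ▸ AffineMap.lt_of_apply_zero_lt_of_le (hk0.trans_le hj0)
    (hkc ▸ hjc) hc0 ht.1)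

section Topological

variable [TopologicalSpace E] [IsTopologicalAddGroup E] [ContinuousSMul ℝ E]
  [TopologicalSpace F] [IsTopologicalAddGroup F] [ContinuousSMul ℝ F]

/-- The max–min representation `f x = max_z min {φ x | φ ∈ S, f z ≤ φ z}` of a continuous
function with affine pieces `S`. -/
theorem exists_mem_le_apply_and_apply_le {f : E → ℝ} (hf : Continuous f)
    {S : Set (E →ᵃ[ℝ] ℝ)} (hS : S.Finite) (hfS : ∀ x, ∃ φ ∈ S, f x = φ x) (z x : E) :
    ∃ φ ∈ S, f z ≤ φ z ∧ φ x ≤ f x := by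
  obtain ⟨_, ⟨φ, hφ, rfl⟩, h0, h1⟩ := exists_mem_le_apply_zero_and_apply_one_le
    (hf.comp (AffineMap.lineMap_continuous (p := z) (q := x)))
    (hS.image (·.comp (AffineMap.lineMap z x)))
    fun t => by
      obtain ⟨φ, hφ, h⟩ := hfS (AffineMap.lineMap z x t)
      exact ⟨_, mem_image_of_mem _ hφ, h⟩
  exact ⟨φ, hφ, by simpa using h0, by simpa using h1⟩

theorem IsPiecewiseAffine.of_isGreatest_image [Module.Finite ℝ F] {Φ : E × F → ℝ}
    (hΦ : IsPiecewiseAffine Φ) (hΦc : Continuous Φ) {U : Set F} (hU : IsPolyhedron U)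
    {M : E → ℝ} (hM : ∀ x, IsGreatest ((fun u => Φ (x, u)) '' U) (M x)) :
    IsPiecewiseAffine M := by
  obtain ⟨S, hS, hΦS⟩ := hΦ
  have hG : ∀ σ ⊆ S, ∃ G : Set (E →ᵃ[ℝ] ℝ), G.Finite ∧ ∀ x t,
      IsGreatest {s | (x, s) ∈ {p : E × ℝ | ∃ u ∈ U, ∀ φ ∈ σ, p.2 ≤ φ (p.1, u)}} t →
        ∃ ψ ∈ G, t = ψ x := fun σ hσ =>
    IsPolyhedron.exists_finite_affineMap_eq_of_isGreatest
      (isPolyhedron_setOf_exists_forall_le hU (hS.subset hσ))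
  choose! G hGfin hG using hG
  refine ⟨⋃ σ ∈ 𝒫 S, G σ, hS.powerset.biUnion hGfin, fun x => ?_⟩
  obtain ⟨⟨u₀, hu₀, hMx⟩, hMub⟩ := hM x
  -- By the max–min representation, `M x` is also the maximum over `u ∈ U` of the minimum of
  -- the pieces lying above `Φ` at the maximiser `(x, u₀)`: a parametric linear program.
  set σ := {φ ∈ S | Φ (x, u₀) ≤ φ (x, u₀)}
  have hσ : IsGreatest {t | ∃ u ∈ U, ∀ φ ∈ σ, t ≤ φ (x, u)} (M x) := by
    refine ⟨⟨u₀, hu₀, fun φ hφ => hMx ▸ hφ.2⟩, ?_⟩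
    rintro t ⟨u, hu, ht⟩
    obtain ⟨φ, hφ, hφz, hφx⟩ := exists_mem_le_apply_and_apply_le hΦc hS hΦS (x, u₀) (x, u)
    exact (ht φ ⟨hφ, hφz⟩).trans (hφx.trans (hMub ⟨u, hu, rfl⟩))
  obtain ⟨ψ, hψ, hMψ⟩ := hG σ (sep_subset _ _) x (M x) hσ
  exact ⟨ψ, mem_biUnion (show σ ∈ 𝒫 S from sep_subset _ _) hψ, hMψ⟩

end Topological

theorem IsCPWA.isPiecewiseAffine {d : ℕ} {h : (Fin d → ℝ) → ℝ} (hh : IsCPWA h) :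
    IsPiecewiseAffine h := by
  obtain ⟨-, r, a, c, hac⟩ := hh
  refine ⟨range fun i => (dotProductBilin ℝ ℝ (a i)).toAffineMap + AffineMap.const ℝ _ (c i),
    finite_range _, fun x => ?_⟩
  obtain ⟨i, hi⟩ := hac x
  exact ⟨_, mem_range_self i, by simp [hi, dotProduct]⟩

theorem IsCPWA2.isPiecewiseAffine {n m : ℕ} {g : (Fin n → ℝ) → (Fin m → ℝ) → ℝ}
    (hg : IsCPWA2 g) : IsPiecewiseAffine fun p : (Fin n → ℝ) × (Fin m → ℝ) => g p.1 p.2 := by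
  obtain ⟨-, r, a, b, c, habc⟩ := hg
  refine ⟨range fun i => (dotProductBilin ℝ ℝ (a i) ∘ₗ LinearMap.fst ℝ _ _ +
    dotProductBilin ℝ ℝ (b i) ∘ₗ LinearMap.snd ℝ _ _).toAffineMap + AffineMap.const ℝ _ (c i),
    finite_range _, fun x => ?_⟩
  obtain ⟨i, hi⟩ := habc x.1 x.2
  exact ⟨_, mem_range_self i, by simp [hi, dotProduct]⟩

theorem IsPiecewiseAffine.isCPWA {d : ℕ} {h : (Fin d → ℝ) → ℝ} (hh : IsPiecewiseAffine h)
    (hc : Continuous h) : IsCPWA h := by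
  obtain ⟨S, hS, hhS⟩ := hh
  obtain ⟨r, e, he⟩ := hS.fin_embedding
  refine ⟨hc, r, fun i j => (e i).linear fun k => if j = k then 1 else 0, fun i => e i 0,
    fun x => ?_⟩
  obtain ⟨φ, hφ, hx⟩ := hhS x
  obtain ⟨i, rfl⟩ : φ ∈ range e := he ▸ hφ
  have hlin := (e i).linearMap_vsub x 0
  simp only [vsub_eq_sub, sub_zero] at hlin
  refine ⟨i, ?_⟩
  rw [hx, ← sub_eq_iff_eq_add, ← hlin, LinearMap.pi_apply_eq_sum_univ]
  simp [mul_comm]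

theorem bellman_step_isCPWA_general {n m : ℕ}
    (g : (Fin n → ℝ) → (Fin m → ℝ) → ℝ) (V : (Fin n → ℝ) → ℝ) (γ : ℝ)
    (hg : IsCPWA2 g) (hV : IsCPWA V)
    (W : Type) [Fintype W] (p : W → ℝ)
    (f : W → (((Fin n → ℝ) × (Fin m → ℝ)) →ᵃ[ℝ] (Fin n → ℝ)))
    (q : ℕ) (A : Fin q → Fin m → ℝ) (b : Fin q → ℝ)
    (hne : {u : Fin m → ℝ | ∀ i, (∑ j, A i j * u j) ≤ b i}.Nonempty)
    (hcpt : IsCompact {u : Fin m → ℝ | ∀ i, (∑ j, A i j * u j) ≤ b i}) :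
    ∃ V' : (Fin n → ℝ) → ℝ,
      (∀ x : Fin n → ℝ, IsGreatest
        ((fun u : Fin m → ℝ => ∑ w, p w * (g x u + γ * V (f w (x, u)))) ''
          {u : Fin m → ℝ | ∀ i, (∑ j, A i j * u j) ≤ b i}) (V' x)) ∧
      IsCPWA V' := by
  set U := {u : Fin m → ℝ | ∀ i, (∑ j, A i j * u j) ≤ b i}
  set Φ : (Fin n → ℝ) × (Fin m → ℝ) → ℝ := fun y => ∑ w, p w * (g y.1 y.2 + γ * V (f w y))
  have hΦc : Continuous Φ := continuous_finsetSum _ fun w _ => continuous_const.mul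
    (hg.1.add (continuous_const.mul (hV.1.comp (f w).continuous_of_finiteDimensional)))
  have hΦ : IsPiecewiseAffine Φ := .finset_sum _ fun w _ =>
    (hg.isPiecewiseAffine.add ((hV.isPiecewiseAffine.comp_affineMap (f w)).const_mul γ)).const_mul
      (p w)
  have hU : IsPolyhedron U :=
    ⟨range fun i => (dotProductBilin ℝ ℝ (A i), b i), finite_range _, by ext; simp [U, dotProduct]⟩
  have hmax : ∀ x, IsGreatest ((fun u => Φ (x, u)) '' U) (sSup ((fun u => Φ (x, u)) '' U)) :=
    fun x => (hcpt.image (hΦc.comp (Continuous.prodMk_right x))).isGreatest_sSup (hne.image _)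
  exact ⟨_, hmax, (hΦ.of_isGreatest_image hΦc hU hmax).isCPWA (hcpt.continuous_sSup hΦc)⟩

/-- Lemma 1, value part: the Bellman optimization step preserves piecewise linearity.
With a continuous piecewise affine stage cost `g`, a continuous piecewise affine value
function `V`, discount `γ ≥ 0`, a finitely supported disturbance `w ∈ W` with
probabilities `p w` and affine dynamics `f w`, and a nonempty compact polyhedral feasible
set `U = {u | ∀ i, ⟨A i, u⟩ ≤ b i}`, the function
`V'(x) = max_{u ∈ U} Σ_w p w · (g(x,u) + γ · V(f_w(x,u)))` is well defined (the maximum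
is attained at every `x`) and continuous piecewise affine. -/
theorem bellman_step_isCPWA {n m : ℕ}
    (g : (Fin n → ℝ) → (Fin m → ℝ) → ℝ) (V : (Fin n → ℝ) → ℝ) (γ : ℝ)
    (hg : IsCPWA2 g) (hV : IsCPWA V) (hγ : 0 ≤ γ)
    (W : Type) [Fintype W] (p : W → ℝ) (hp : ∀ w, 0 ≤ p w) (hpsum : ∑ w, p w = 1)
    (f : W → (((Fin n → ℝ) × (Fin m → ℝ)) →ᵃ[ℝ] (Fin n → ℝ)))
    (q : ℕ) (A : Fin q → Fin m → ℝ) (b : Fin q → ℝ)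
    (hne : {u : Fin m → ℝ | ∀ i, (∑ j, A i j * u j) ≤ b i}.Nonempty)
    (hcpt : IsCompact {u : Fin m → ℝ | ∀ i, (∑ j, A i j * u j) ≤ b i}) :
    ∃ V' : (Fin n → ℝ) → ℝ,
      (∀ x : Fin n → ℝ, IsGreatest
        ((fun u : Fin m → ℝ => ∑ w, p w * (g x u + γ * V (f w (x, u)))) ''
          {u : Fin m → ℝ | ∀ i, (∑ j, A i j * u j) ≤ b i}) (V' x)) ∧
      IsCPWA V' :=
  bellman_step_isCPWA_general g V γ hg hV W p f q A b hne hcpt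
end
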